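/- Let k ≥ 1 be an integer, u ∈ [−1,1], and h = h_k^{(u)}. Suppose γ, λ ∈ (0,1) with γ < λ and h(γ) = h(λ) = 0. Then every f ∈ ℬ_{[−1,1]} with f(γ) = 0 and f not identically equal to h satisfies f(x) < 0 for all x ∈ (γ, λ]. In particular, h is the unique element of ℬ_{[−1,1]} vanishing at both γ and λ. -/

import Mathlib

open Set Filter Topology

noncomputable section

/-- The function on `(-1,1)` defined by the power series with coefficient sequence `a`. -/
def seriesFun (a : ℕ → ℝ) (x : ℝ) : ℝ := ∑' n, a n * x ^ n

/-- `a` is the coefficient sequence of a power series in the class `ℬ`: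
constant term `1` and all other coefficients in `{-1, 0, 1}`. -/
def memB (a : ℕ → ℝ) : Prop :=
  a 0 = 1 ∧ ∀ n, 1 ≤ n → a n = -1 ∨ a n = 0 ∨ a n = 1

/-- `a` is the coefficient sequence of a power series in the class `ℬ_{[-1,1]}`:
constant term `1` and all other coefficients in `[-1, 1]`. -/
def memBI (a : ℕ → ℝ) : Prop :=
  a 0 = 1 ∧ ∀ n, 1 ≤ n → a n ∈ Set.Icc (-1 : ℝ) 1

/-- `F` has at least `k` zeros in `(0, t]`, counted with multiplicity
(multiplicity = order of vanishing). -/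
def hasZeros (F : ℝ → ℝ) (k : ℕ) (t : ℝ) : Prop :=
  ∃ (s : Finset ℝ) (d : ℝ → ℕ),
    (∀ x ∈ s, x ∈ Set.Ioc (0 : ℝ) t ∧ 1 ≤ d x ∧ ∀ j < d x, iteratedDeriv j F x = 0) ∧
    k ≤ ∑ x ∈ s, d x

/-- `ξ_k(F)`: the `k`-th zero of `F` in `(0,1)` counted with multiplicity,
with the convention `ξ_k(F) = 1` if there are fewer than `k` such zeros. -/
def xi (k : ℕ) (F : ℝ → ℝ) : ℝ :=
  sInf (insert 1 {t | t ∈ Set.Ioo (0 : ℝ) 1 ∧ hasZeros F k t})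

/-- `α₂`: the smallest double zero in `(0,1)` of a power series in `ℬ_{[-1,1]}`. -/
def alpha2 : ℝ :=
  sInf {x | x ∈ Set.Ioo (0 : ℝ) 1 ∧
    ∃ a, memBI a ∧ seriesFun a x = 0 ∧ deriv (seriesFun a) x = 0}

/-- `α₃`: the smallest triple zero in `(0,1)` of a power series in `ℬ_{[-1,1]}`. -/
def alpha3 : ℝ :=
  sInf {x | x ∈ Set.Ioo (0 : ℝ) 1 ∧
    ∃ a, memBI a ∧ seriesFun a x = 0 ∧ deriv (seriesFun a) x = 0 ∧
      iteratedDeriv 2 (seriesFun a) x = 0}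

/-- The set of values `ξ₂(f)` over `f ∈ ℬ_{[-1,1]}` with `f(γ) = 0`. -/
def phiSet (γ : ℝ) : Set ℝ :=
  {y | ∃ a, memBI a ∧ seriesFun a γ = 0 ∧ y = xi 2 (seriesFun a)}

/-- `φ(γ) = min { ξ₂(f) : f ∈ ℬ_{[-1,1]}, f(γ) = 0 }`. -/
def phi (γ : ℝ) : ℝ := sInf (phiSet γ)

/-- The set of values `ξ₃(f)` over `f ∈ ℬ_{[-1,1]}` with `f(γ) = 0`. -/
def psiSet (γ : ℝ) : Set ℝ :=
  {y | ∃ a, memBI a ∧ seriesFun a γ = 0 ∧ y = xi 3 (seriesFun a)}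

/-- `ψ(γ) = min { ξ₃(f) : f ∈ ℬ_{[-1,1]}, f(γ) = 0 }`. -/
def psi (γ : ℝ) : ℝ := sInf (psiSet γ)

/-- The `(*)`-function `h_k^{(a)}(x) = 1 - x - ⋯ - x^(k-1) + a x^k + x^(k+1)/(1-x)`. -/
def hstar (k : ℕ) (a : ℝ) (x : ℝ) : ℝ :=
  1 - ∑ i ∈ Finset.Ico 1 k, x ^ i + a * x ^ k + x ^ (k + 1) / (1 - x)

/-- The `(**)`-function
`H_{k,ℓ}^{(a,b)}(x) = 1 - ∑_{i=1}^{k-1} x^i + a x^k + ∑_{i=k+1}^{ℓ-1} x^i + b x^ℓ - x^(ℓ+1)/(1-x)`. -/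
def Hstar (k l : ℕ) (a b : ℝ) (x : ℝ) : ℝ :=
  1 - ∑ i ∈ Finset.Ico 1 k, x ^ i + a * x ^ k + ∑ i ∈ Finset.Ico (k + 1) l, x ^ i +
    b * x ^ l - x ^ (l + 1) / (1 - x)

/-- The set `𝒩₊`. -/
def Nplus : Set (ℝ × ℝ) :=
  {p | 0 < p.1 ∧ p.1 < p.2 ∧ p.2 < 1 ∧
    ∃ a, memB a ∧ seriesFun a p.1 = 0 ∧ seriesFun a p.2 = 0}

/-- The set `𝒩̃₊`. -/
def NtildePlus : Set (ℝ × ℝ) :=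
  {p | p ∈ Nplus ∧ ∃ a, memB a ∧ seriesFun a p.1 = 0 ∧ seriesFun a p.2 = 0 ∧
    hasZeros (seriesFun a) 3 p.2}

/-- The "trivial" part `𝒩_t` of the connectedness locus. -/
def Nt : Set (ℝ × ℝ) :=
  {p | p.1 ∈ Set.Ioo (-1 : ℝ) 1 ∧ p.2 ∈ Set.Ioo (-1 : ℝ) 1 ∧ 1 / 2 ≤ |p.1 * p.2|}

/-- The region `Δ`. -/
def Delta : Set (ℝ × ℝ) :=
  {p | p.1 ∈ Set.Ioo (0 : ℝ) 1 ∧ p.2 ∈ Set.Ioo (0 : ℝ) 1 ∧ p.1 < p.2 ∧ p.1 * p.2 < 1 / 2}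


/-!
Write `f - h = ∑ cₙ xⁿ`. The coefficients of `h` are extremal (`-1` below `x^k`, `1` above it), so
`cₙ ≥ 0` for `n < k` and `cₙ ≤ 0` for `n > k`; hence `(f - h)(t) / t^k = ∑ cₙ t^(n-k)` is
nonincreasing on `(0,1)`, strictly unless `c` is supported at `k`. Since it vanishes at `γ`, this
gives `f < h` on `(γ, 1)` unless `f = h`. Finally `(1 - x) h(x) = 1 - 2x + (1+u) x^k + (1-u) x^(k+1)`
is convex on `[0, ∞)` and vanishes at `γ` and `λ`, so `h ≤ 0` on `[γ, λ]`.
-/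

def hstarCoeff (k : ℕ) (u : ℝ) (n : ℕ) : ℝ :=
  if n = 0 then 1 else if n < k then -1 else if n = k then u else 1

lemma memBI_hstarCoeff {k : ℕ} {u : ℝ} (hu : u ∈ Icc (-1 : ℝ) 1) : memBI (hstarCoeff k u) := by
  refine ⟨by simp [hstarCoeff], fun n _ => ?_⟩
  unfold hstarCoeff
  split_ifs <;> first | exact hu | norm_num

lemma hstarCoeff_le_of_lt {k : ℕ} {u : ℝ} {a : ℕ → ℝ} (ha : memBI a) {n : ℕ} (hn : n < k) :
    hstarCoeff k u n ≤ a n := by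
  rcases Nat.eq_zero_or_pos n with rfl | hpos
  · simp [hstarCoeff, ha.1]
  · simpa [hstarCoeff, hpos.ne', hn] using (ha.2 n hpos).1

lemma le_hstarCoeff_of_lt {k : ℕ} {u : ℝ} {a : ℕ → ℝ} (ha : memBI a) {n : ℕ} (hn : k < n) :
    a n ≤ hstarCoeff k u n := by
  simpa [hstarCoeff, (Nat.zero_le k).trans_lt hn |>.ne', hn.not_gt, hn.ne'] using
    (ha.2 n (by omega)).2

lemma abs_le_one_of_memBI {a : ℕ → ℝ} (ha : memBI a) (n : ℕ) : |a n| ≤ 1 := by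
  rcases Nat.eq_zero_or_pos n with rfl | hpos
  · simp [ha.1]
  · exact abs_le.mpr (ha.2 n hpos)

lemma summable_mul_pow_of_abs_le {c : ℕ → ℝ} {C : ℝ} (hc : ∀ n, |c n| ≤ C) {x : ℝ}
    (hx : |x| < 1) : Summable (fun n => c n * x ^ n) := by
  refine .of_norm_bounded ((summable_geometric_of_lt_one (abs_nonneg x) hx).mul_left C) fun n => ?_
  rw [Real.norm_eq_abs, abs_mul, abs_pow]
  exact mul_le_mul_of_nonneg_right (hc n) (by positivity)

lemma summable_mul_pow_of_memBI {a : ℕ → ℝ} (ha : memBI a) {x : ℝ} (hx : x ∈ Ioo (-1 : ℝ) 1) :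
    Summable (fun n => a n * x ^ n) :=
  summable_mul_pow_of_abs_le (abs_le_one_of_memBI ha) (abs_lt.mpr hx)

lemma seriesFun_sub {a b : ℕ → ℝ} {x : ℝ} (ha : Summable (fun n => a n * x ^ n))
    (hb : Summable (fun n => b n * x ^ n)) :
    seriesFun (a - b) x = seriesFun a x - seriesFun b x := by
  simp only [seriesFun, Pi.sub_apply, sub_mul]
  exact ha.tsum_sub hb

lemma sum_range_hstarCoeff_mul_pow {k : ℕ} (hk : 1 ≤ k) (u x : ℝ) :
    ∑ i ∈ Finset.range (k + 1), hstarCoeff k u i * x ^ i =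
      1 - ∑ i ∈ Finset.Ico 1 k, x ^ i + u * x ^ k := by
  have hmid : ∑ i ∈ Finset.Ico 1 k, hstarCoeff k u i * x ^ i = -∑ i ∈ Finset.Ico 1 k, x ^ i := by
    rw [← Finset.sum_neg_distrib]
    refine Finset.sum_congr rfl fun i hi => ?_
    obtain ⟨hi1, hik⟩ := Finset.mem_Ico.mp hi
    have hi0 : i ≠ 0 := by omega
    simp [hstarCoeff, hi0, hik]
  have hk0 : k ≠ 0 := by omega
  rw [Finset.sum_range_succ, Finset.range_eq_Ico, Finset.sum_eq_sum_Ico_succ_bot (by omega), hmid]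
  simp only [hstarCoeff, hk0, lt_irrefl, if_true, if_false, pow_zero]
  ring

lemma seriesFun_hstarCoeff {k : ℕ} (hk : 1 ≤ k) (u : ℝ) {x : ℝ} (hx : x ∈ Ioo (-1 : ℝ) 1) :
    seriesFun (hstarCoeff k u) x = hstar k u x := by
  have htail : HasSum (fun n => hstarCoeff k u (n + (k + 1)) * x ^ (n + (k + 1)))
      (x ^ (k + 1) / (1 - x)) := by
    have hgeom := (hasSum_geometric_of_abs_lt_one (abs_lt.mpr hx)).mul_left (x ^ (k + 1))
    rw [← div_eq_mul_inv] at hgeom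
    refine hgeom.congr_fun fun n => ?_
    simp only [hstarCoeff]
    rw [if_neg (by omega), if_neg (by omega), if_neg (by omega), pow_add]
    ring
  refine ((hasSum_nat_add_iff' (k + 1)).mp ?_).tsum_eq
  rwa [sum_range_hstarCoeff_mul_pow hk, hstar, add_sub_cancel_left]

lemma one_sub_mul_hstar {k : ℕ} (hk : 1 ≤ k) (u : ℝ) {x : ℝ} (hx : x ≠ 1) :
    (1 - x) * hstar k u x = 1 - 2 * x + (1 + u) * x ^ k + (1 - u) * x ^ (k + 1) := by
  have hx' : 1 - x ≠ 0 := sub_ne_zero.mpr hx.symm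
  rw [hstar]
  field_simp
  linear_combination -geom_sum_Ico_mul_neg x hk

lemma convexOn_one_sub_two_mul_add {k : ℕ} {u : ℝ} (hu : u ∈ Icc (-1 : ℝ) 1) :
    ConvexOn ℝ (Ici 0) fun x : ℝ => 1 - 2 * x + (1 + u) * x ^ k + (1 - u) * x ^ (k + 1) := by
  have hlin : ConcaveOn ℝ (Ici (0 : ℝ)) fun x => (2 : ℝ) • x :=
    (concaveOn_id (convex_Ici 0)).smul (by norm_num)
  have hk : ConvexOn ℝ (Ici (0 : ℝ)) fun x => (1 + u) • x ^ k :=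
    (convexOn_pow k).smul (by linarith [hu.1])
  have hk1 : ConvexOn ℝ (Ici (0 : ℝ)) fun x => (1 - u) • x ^ (k + 1) :=
    (convexOn_pow (k + 1)).smul (by linarith [hu.2])
  refine ((((convexOn_const 1 (convex_Ici 0)).sub hlin).add hk).add hk1).congr fun x _ => ?_
  simp [smul_eq_mul]

lemma hstar_nonpos_of_mem_Icc {k : ℕ} (hk : 1 ≤ k) {u : ℝ} (hu : u ∈ Icc (-1 : ℝ) 1)
    {γ lam : ℝ} (hγ : 0 < γ) (hlam : lam < 1) (h0 : hstar k u γ = 0) (h1 : hstar k u lam = 0)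
    {x : ℝ} (hx : x ∈ Icc γ lam) : hstar k u x ≤ 0 := by
  have hx1 : x < 1 := hx.2.trans_lt hlam
  have hconv := (convexOn_one_sub_two_mul_add (k := k) hu).le_on_segment (mem_Ici.mpr hγ.le)
    (mem_Ici.mpr (hγ.le.trans (hx.1.trans hx.2))) (by rwa [segment_eq_Icc (hx.1.trans hx.2)])
  have hγ1 : γ < 1 := hx.1.trans_lt hx1
  rw [← one_sub_mul_hstar hk u hx1.ne, ← one_sub_mul_hstar hk u hγ1.ne,
    ← one_sub_mul_hstar hk u hlam.ne, h0, h1] at hconv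
  simp only [mul_zero, max_self] at hconv
  exact nonpos_of_mul_nonpos_right hconv (by linarith)

lemma pow_mul_pow_sub_pow_mul_pow_pos {x y : ℝ} (hy : 0 < y) (hyx : y < x) {m n : ℕ}
    (hmn : m < n) : 0 < y ^ m * x ^ n - x ^ m * y ^ n := by
  obtain ⟨d, rfl⟩ := Nat.exists_eq_add_of_lt hmn
  have hpow : y ^ (d + 1) < x ^ (d + 1) := pow_lt_pow_left₀ hyx hy.le (by omega)
  have hfactor : y ^ m * x ^ (m + d + 1) - x ^ m * y ^ (m + d + 1) =
      (x * y) ^ m * (x ^ (d + 1) - y ^ (d + 1)) := by ring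
  rw [hfactor]
  exact mul_pos (pow_pos (mul_pos (hy.trans hyx) hy) m) (sub_pos.mpr hpow)

section Comparison

variable {k : ℕ} {c : ℕ → ℝ} (hlo : ∀ n < k, 0 ≤ c n) (hhi : ∀ n, k < n → c n ≤ 0)
include hlo hhi

lemma mul_pow_mul_pow_sub_pos {x y : ℝ} (hy : 0 < y) (hyx : y < x) {n : ℕ} (hnk : n ≠ k)
    (hcn : c n ≠ 0) : 0 < c n * (y ^ n * x ^ k - x ^ n * y ^ k) := by
  rcases hnk.lt_or_gt with hlt | hgt
  · exact mul_pos ((hlo n hlt).lt_of_ne' hcn) (pow_mul_pow_sub_pow_mul_pow_pos hy hyx hlt)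
  · refine mul_pos_of_neg_of_neg ((hhi n hgt).lt_of_ne hcn) ?_
    linarith [pow_mul_pow_sub_pow_mul_pow_pos hy hyx hgt]

lemma mul_pow_mul_pow_sub_nonneg {x y : ℝ} (hy : 0 < y) (hyx : y < x) (n : ℕ) :
    0 ≤ c n * (y ^ n * x ^ k - x ^ n * y ^ k) := by
  by_cases hnk : n = k
  · rw [hnk, mul_comm (y ^ k), sub_self, mul_zero]
  by_cases hcn : c n = 0
  · simp [hcn]
  exact (mul_pow_mul_pow_sub_pos hlo hhi hy hyx hnk hcn).le

lemma seriesFun_mul_pow_lt {C : ℝ} (hC : ∀ n, |c n| ≤ C) {x y : ℝ} (hy : 0 < y) (hyx : y < x)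
    (hx : x < 1) {n : ℕ} (hnk : n ≠ k) (hcn : c n ≠ 0) :
    seriesFun c x * y ^ k < seriesFun c y * x ^ k := by
  have hsum : HasSum (fun n => c n * (y ^ n * x ^ k - x ^ n * y ^ k))
      (seriesFun c y * x ^ k - seriesFun c x * y ^ k) := by
    have hy' := summable_mul_pow_of_abs_le hC (x := y) (abs_lt.mpr ⟨by linarith, by linarith⟩)
    have hx' := summable_mul_pow_of_abs_le hC (x := x) (abs_lt.mpr ⟨by linarith, by linarith⟩)
    refine ((hy'.hasSum.mul_right (x ^ k)).sub (hx'.hasSum.mul_right (y ^ k))).congr_fun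
      fun n => ?_
    ring
  rw [← sub_pos, ← hsum.tsum_eq]
  exact hsum.summable.tsum_pos (mul_pow_mul_pow_sub_nonneg hlo hhi hy hyx) n
    (mul_pow_mul_pow_sub_pos hlo hhi hy hyx hnk hcn)

end Comparison

lemma exists_ne_and_ne_zero_of_seriesFun_eq_zero {c : ℕ → ℝ} (hc : c ≠ 0) {x : ℝ} (hx : x ≠ 0)
    (hcx : seriesFun c x = 0) (k : ℕ) : ∃ n ≠ k, c n ≠ 0 := by
  by_contra! hck
  have hsingle : seriesFun c x = c k * x ^ k :=
    tsum_eq_single k fun n hn => by rw [hck n hn, zero_mul]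
  have hck' : c k = 0 :=
    (mul_eq_zero.mp (hsingle.symm.trans hcx)).resolve_right (pow_ne_zero k hx)
  refine hc (funext fun n => ?_)
  by_cases hn : n = k
  · rw [hn, hck', Pi.zero_apply]
  · exact hck n hn

lemma seriesFun_lt_hstar {k : ℕ} (hk : 1 ≤ k) {u : ℝ} (hu : u ∈ Icc (-1 : ℝ) 1) {a : ℕ → ℝ}
    (ha : memBI a) (hne : a ≠ hstarCoeff k u) {γ x : ℝ} (hγ : 0 < γ) (hγx : γ < x) (hx : x < 1)
    (haγ : seriesFun a γ = 0) (h0 : hstar k u γ = 0) : seriesFun a x < hstar k u x := by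
  set c := a - hstarCoeff k u
  have hh := memBI_hstarCoeff (k := k) hu
  have hc : ∀ t ∈ Ioo (-1 : ℝ) 1, seriesFun c t = seriesFun a t - hstar k u t := fun t ht => by
    rw [seriesFun_sub (summable_mul_pow_of_memBI ha ht) (summable_mul_pow_of_memBI hh ht),
      seriesFun_hstarCoeff hk u ht]
  have hcγ : seriesFun c γ = 0 := by
    rw [hc γ ⟨by linarith, by linarith⟩, haγ, h0, sub_zero]
  obtain ⟨n, hnk, hcn⟩ :=
    exists_ne_and_ne_zero_of_seriesFun_eq_zero (sub_ne_zero.mpr hne) hγ.ne' hcγ k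
  have hlo : ∀ n < k, 0 ≤ c n := fun n hn => sub_nonneg.mpr (hstarCoeff_le_of_lt ha hn)
  have hhi : ∀ n, k < n → c n ≤ 0 := fun n hn => sub_nonpos.mpr (le_hstarCoeff_of_lt ha hn)
  have hbound : ∀ n, |c n| ≤ 1 + 1 := fun n =>
    (abs_sub _ _).trans (add_le_add (abs_le_one_of_memBI ha n) (abs_le_one_of_memBI hh n))
  have hlt := seriesFun_mul_pow_lt hlo hhi hbound hγ hγx hx hnk hcn
  rw [hcγ, zero_mul, hc x ⟨by linarith, hx⟩] at hlt
  exact sub_neg.mp (neg_of_mul_neg_left hlt (pow_pos hγ k).le)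

/-- If `h = h_k^{(u)}` vanishes at `γ < λ` in `(0,1)`, then every
`f ∈ ℬ_{[-1,1]}` with `f(γ) = 0` not identically equal to `h` is negative on `(γ, λ]`;
in particular `h` is the unique element of `ℬ_{[-1,1]}` vanishing at both `γ` and `λ`. -/
theorem stmt6 (k : ℕ) (hk : 1 ≤ k) (u : ℝ) (hu : u ∈ Set.Icc (-1 : ℝ) 1)
    (γ lam : ℝ) (hγ : γ ∈ Set.Ioo (0 : ℝ) 1) (hlam : lam ∈ Set.Ioo (0 : ℝ) 1)
    (hlt : γ < lam) (h0 : hstar k u γ = 0) (h1 : hstar k u lam = 0) :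
    (∀ a : ℕ → ℝ, memBI a → seriesFun a γ = 0 →
      ¬ Set.EqOn (seriesFun a) (hstar k u) (Set.Ioo (-1 : ℝ) 1) →
      ∀ x ∈ Set.Ioc γ lam, seriesFun a x < 0) ∧
    (∀ a : ℕ → ℝ, memBI a → seriesFun a γ = 0 → seriesFun a lam = 0 →
      Set.EqOn (seriesFun a) (hstar k u) (Set.Ioo (-1 : ℝ) 1)) := by
  have hneg : ∀ a : ℕ → ℝ, memBI a → seriesFun a γ = 0 →
      ¬ Set.EqOn (seriesFun a) (hstar k u) (Set.Ioo (-1 : ℝ) 1) →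
      ∀ x ∈ Set.Ioc γ lam, seriesFun a x < 0 := by
    intro a ha haγ hne x hx
    have ha' : a ≠ hstarCoeff k u := by
      rintro rfl
      exact hne fun t ht => seriesFun_hstarCoeff hk u ht
    calc seriesFun a x < hstar k u x :=
          seriesFun_lt_hstar hk hu ha ha' hγ.1 hx.1 (hx.2.trans_lt hlam.2) haγ h0
      _ ≤ 0 := hstar_nonpos_of_mem_Icc hk hu hγ.1 hlam.2 h0 h1 (Ioc_subset_Icc_self hx)
  refine ⟨hneg, fun a ha haγ halam => ?_⟩
  by_contra hne
  exact (hneg a ha haγ hne lam ⟨hlt, le_rfl⟩).ne halam
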